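/- arXiv:1604.04484 — 4 statements merged into one kernel-verified Lean document; each statement's English description precedes it below -/
import Mathlib

section
/- Let μ ∈ ℝⁿ and y, y' ∈ ℝⁿ with y and y' differing in at most k coordinates, where all coordinates of y and y' lie in [0,1]. Define for each j: u_j = max(μ_j(1 - y_j), μ_j(0 - y_j)) and l_j = min(μ_j(1 - y_j), μ_j(0 - y_j)). Let U_k be the sum of the k largest values among u_1,…,u_n and L_k be the sum of the k smallest values among l_1,…,l_n. Then μ·y + L_k ≤ μ·y' ≤ μ·y + U_k. -/
/-! Enlarge the set of coordinates where `y` and `y'` differ to a set `S` of exactly `k`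
indices; then `μ·y' - μ·y = ∑_{j ∈ S} μ_j (y'_j - y_j)`, and since `y'_j ∈ [0,1]` each term
lies between `l_j` and `u_j`, so the sum lies between `L_k` and `U_k`. -/

open Finset

theorem exists_card_eq_sum_sub_sum_eq {ι M : Type*} [Fintype ι] [AddCommGroup M] {k : ℕ}
    (f g : ι → M) (hk : k ≤ Fintype.card ι) (hdiff : {j | f j ≠ g j}.ncard ≤ k) :
    ∃ S : Finset ι, S.card = k ∧ ∑ j, g j - ∑ j, f j = ∑ j ∈ S, (g j - f j) := by
  classical
  set D := univ.filter fun j => f j ≠ g j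
  have hD : D.card ≤ k := by
    rwa [← Set.ncard_coe_finset, coe_filter_univ]
  obtain ⟨S, hDS, hS⟩ := exists_superset_card_eq hD (by simpa using hk)
  refine ⟨S, hS, ?_⟩
  rw [← sum_sub_distrib, ← sum_subset (subset_univ S)]
  intro j _ hjS
  have hfg : f j = g j := by
    by_contra h
    exact hjS (hDS (mem_filter.2 ⟨mem_univ j, h⟩))
  rw [hfg, sub_self]

theorem mul_sub_mem_min_max {R : Type*} [Ring R] [LinearOrder R] [IsStrictOrderedRing R]
    {a : R} (c b : R) (ha : a ∈ Set.Icc (0 : R) 1) :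
    min (c * (1 - b)) (c * (0 - b)) ≤ c * (a - b) ∧
      c * (a - b) ≤ max (c * (1 - b)) (c * (0 - b)) := by
  have h0 : 0 - b ≤ a - b := sub_le_sub_right ha.1 b
  have h1 : a - b ≤ 1 - b := sub_le_sub_right ha.2 b
  rcases le_total 0 c with hc | hc
  · exact ⟨(min_le_right _ _).trans (mul_le_mul_of_nonneg_left h0 hc),
      (mul_le_mul_of_nonneg_left h1 hc).trans (le_max_left _ _)⟩
  · exact ⟨(min_le_left _ _).trans (mul_le_mul_of_nonpos_left h1 hc),
      (mul_le_mul_of_nonpos_left h0 hc).trans (le_max_right _ _)⟩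

theorem stmt0_general {n k : ℕ} (μ y y' : Fin n → ℝ)
    (hy' : ∀ j, y' j ∈ Set.Icc (0:ℝ) 1)
    (hk : k ≤ n)
    (hdiff : {j | y j ≠ y' j}.ncard ≤ k)
    (u l : Fin n → ℝ)
    (hu : ∀ j, u j = max (μ j * (1 - y j)) (μ j * (0 - y j)))
    (hl : ∀ j, l j = min (μ j * (1 - y j)) (μ j * (0 - y j)))
    (U L : ℝ)
    (hU : IsGreatest {v | ∃ S : Finset (Fin n), S.card = k ∧ v = ∑ j ∈ S, u j} U)
    (hL : IsLeast {v | ∃ S : Finset (Fin n), S.card = k ∧ v = ∑ j ∈ S, l j} L) :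
    (∑ j, μ j * y j) + L ≤ ∑ j, μ j * y' j ∧
      (∑ j, μ j * y' j) ≤ (∑ j, μ j * y j) + U := by
  have hdiff' : {j | μ j * y j ≠ μ j * y' j}.ncard ≤ k :=
    (Set.ncard_le_ncard fun j (hj : μ j * y j ≠ μ j * y' j) (h : y j = y' j) =>
      hj (by rw [h])).trans hdiff
  obtain ⟨S, hS, hsum⟩ :=
    exists_card_eq_sum_sub_sum_eq (fun j => μ j * y j) (fun j => μ j * y' j)
      (by simpa using hk) hdiff'
  simp only [← mul_sub] at hsum
  have hLS : ∑ j ∈ S, l j ≤ ∑ j ∈ S, μ j * (y' j - y j) :=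
    sum_le_sum fun j _ => hl j ▸ (mul_sub_mem_min_max (μ j) (y j) (hy' j)).1
  have hUS : ∑ j ∈ S, μ j * (y' j - y j) ≤ ∑ j ∈ S, u j :=
    sum_le_sum fun j _ => hu j ▸ (mul_sub_mem_min_max (μ j) (y j) (hy' j)).2
  have := hL.2 ⟨S, hS, rfl⟩
  have := hU.2 ⟨S, hS, rfl⟩
  constructor <;> linarith

/-- If `y` and `y'` have coordinates in `[0,1]` and differ in at most `k`
coordinates, then `μ·y + L_k ≤ μ·y' ≤ μ·y + U_k`, where `U_k` is the sum of the `k`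
largest values among the `u_j` (equivalently the greatest size-`k` subset sum) and
`L_k` the sum of the `k` smallest values among the `l_j`. -/
theorem stmt0 {n k : ℕ} (μ y y' : Fin n → ℝ)
    (hy : ∀ j, y j ∈ Set.Icc (0:ℝ) 1) (hy' : ∀ j, y' j ∈ Set.Icc (0:ℝ) 1)
    (hk : k ≤ n)
    (hdiff : {j | y j ≠ y' j}.ncard ≤ k)
    (u l : Fin n → ℝ)
    (hu : ∀ j, u j = max (μ j * (1 - y j)) (μ j * (0 - y j)))
    (hl : ∀ j, l j = min (μ j * (1 - y j)) (μ j * (0 - y j)))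
    (U L : ℝ)
    (hU : IsGreatest {v | ∃ S : Finset (Fin n), S.card = k ∧ v = ∑ j ∈ S, u j} U)
    (hL : IsLeast {v | ∃ S : Finset (Fin n), S.card = k ∧ v = ∑ j ∈ S, l j} L) :
    (∑ j, μ j * y j) + L ≤ ∑ j, μ j * y' j ∧
      (∑ j, μ j * y' j) ≤ (∑ j, μ j * y j) + U :=
  stmt0_general μ y y' hy' hk hdiff u l hu hl U L hU hL
end

section
/- Let μ ∈ ℝⁿ, y ∈ {0,1}ⁿ, and c ∈ ℝ. Define d(c) = min over y' ∈ [0,1]ⁿ with μ·y' = c of the number of coordinates where y and y' differ (if such y' exists). With u_j = max(μ_j(1-y_j), -μ_j y_j), l_j = min(μ_j(1-y_j), -μ_j y_j), U_k = sum of the k largest u_j, L_k = sum of the k smallest l_j, and U_0 = L_0 = 0: d(c) ≤ k if and only if μ·y + L_k ≤ c ≤ μ·y + U_k. -/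
/-!
Changing coordinate `j` of `y` to `t ∈ [0,1]` moves `μ·y` by `μ_j (t - y_j)`, and these moves fill
exactly the interval `[l_j, u_j]`, which contains `0`. Since a finite sum of intervals is an
interval (intermediate value theorem), changing only coordinates in a set `S` reaches exactly the
values `c` with `c - μ·y ∈ [∑_S l, ∑_S u]`. For `|S| = k` this interval lies in `[L_k, U_k]`;
conversely, a set realizing `U_k` (if `c ≥ μ·y`) or `L_k` (if `c ≤ μ·y`) has an interval
containing `c - μ·y`, because `∑_S l ≤ 0 ≤ ∑_S u`.
-/

open Set

theorem image_mul_sub_Icc_zero_one {𝕜 : Type*} [Field 𝕜] [LinearOrder 𝕜] [IsStrictOrderedRing 𝕜]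
    (a b : 𝕜) :
    (fun t => a * (t - b)) '' Icc 0 1 =
      Icc (min (a * (1 - b)) (-(a * b))) (max (a * (1 - b)) (-(a * b))) := by
  have : (fun t => a * (t - b)) = (a * ·) ∘ (· - b) := rfl
  rw [← uIcc_of_le zero_le_one, this, image_comp, image_sub_const_uIcc, image_const_mul_uIcc,
    uIcc, zero_sub, mul_neg, min_comm, max_comm]

theorem exists_sum_eq_of_mem_Icc_sum {ι : Type*} (S : Finset ι) {l u : ι → ℝ}
    (hlu : ∀ j ∈ S, l j ≤ u j) {δ : ℝ} (hδ : δ ∈ Icc (∑ j ∈ S, l j) (∑ j ∈ S, u j)) :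
    ∃ d : ι → ℝ, (∀ j ∈ S, d j ∈ Icc (l j) (u j)) ∧ ∑ j ∈ S, d j = δ := by
  set f : ℝ → ℝ := fun s => ∑ j ∈ S, (l j + s * (u j - l j))
  have hf : ContinuousOn f (Icc 0 1) := by fun_prop
  obtain ⟨s, ⟨hs0, hs1⟩, hs⟩ := intermediate_value_Icc zero_le_one hf (by simpa [f] using hδ)
  refine ⟨fun j => l j + s * (u j - l j), fun j hj => ⟨?_, ?_⟩, hs⟩ <;>
    nlinarith [hlu j hj]

theorem sum_mul_sub_eq_sub_of_eq_off {ι : Type*} [Fintype ι] (μ : ι → ℝ) {y y' : ι → ℝ}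
    (S : Finset ι) (h : ∀ j ∉ S, y' j = y j) :
    ∑ j ∈ S, μ j * (y' j - y j) = ∑ j, μ j * y' j - ∑ j, μ j * y j := by
  rw [← Finset.sum_sub_distrib]
  simp_rw [← mul_sub]
  exact Finset.sum_subset (Finset.subset_univ S) fun j _ hj => by simp [h j hj]

theorem exists_card_eq_mem_Icc_sum {ι : Type*} {l u : ι → ℝ} {k : ℕ} {L U δ : ℝ}
    (hlu : ∀ j, 0 ∈ Icc (l j) (u j))
    (hU : IsGreatest {v | ∃ S : Finset ι, S.card = k ∧ v = ∑ j ∈ S, u j} U)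
    (hL : IsLeast {v | ∃ S : Finset ι, S.card = k ∧ v = ∑ j ∈ S, l j} L)
    (hδ : δ ∈ Icc L U) :
    ∃ S : Finset ι, S.card = k ∧ δ ∈ Icc (∑ j ∈ S, l j) (∑ j ∈ S, u j) := by
  rcases le_total 0 δ with hδ0 | hδ0
  · obtain ⟨S, hS, rfl⟩ := hU.1
    exact ⟨S, hS, (Finset.sum_nonpos fun j _ => (hlu j).1).trans hδ0, hδ.2⟩
  · obtain ⟨S, hS, rfl⟩ := hL.1
    exact ⟨S, hS, hδ.1, hδ0.trans (Finset.sum_nonneg fun j _ => (hlu j).2)⟩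

section Coordinates

variable {ι : Type*} {μ y u l : ι → ℝ}

theorem mem_Icc_iff_exists_mul_sub_eq
    (hu : ∀ j, u j = max (μ j * (1 - y j)) (-(μ j * y j)))
    (hl : ∀ j, l j = min (μ j * (1 - y j)) (-(μ j * y j))) (j : ι) {δ : ℝ} :
    δ ∈ Icc (l j) (u j) ↔ ∃ t ∈ Icc (0 : ℝ) 1, μ j * (t - y j) = δ := by
  rw [hl, hu, ← image_mul_sub_Icc_zero_one]
  rfl

theorem exists_eq_off_sum_mul_eq_iff [Fintype ι] (hy : ∀ j, y j ∈ Icc (0 : ℝ) 1)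
    (hu : ∀ j, u j = max (μ j * (1 - y j)) (-(μ j * y j)))
    (hl : ∀ j, l j = min (μ j * (1 - y j)) (-(μ j * y j))) (S : Finset ι) (c : ℝ) :
    (∃ y' : ι → ℝ, (∀ j, y' j ∈ Icc (0 : ℝ) 1) ∧ (∀ j ∉ S, y' j = y j) ∧
        ∑ j, μ j * y' j = c) ↔
      c - ∑ j, μ j * y j ∈ Icc (∑ j ∈ S, l j) (∑ j ∈ S, u j) := by
  have hmem := mem_Icc_iff_exists_mul_sub_eq hu hl
  constructor
  · rintro ⟨y', hy', hS, rfl⟩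
    have hbound j : μ j * (y' j - y j) ∈ Icc (l j) (u j) := (hmem j).2 ⟨y' j, hy' j, rfl⟩
    rw [← sum_mul_sub_eq_sub_of_eq_off μ S hS]
    exact ⟨Finset.sum_le_sum fun j _ => (hbound j).1, Finset.sum_le_sum fun j _ => (hbound j).2⟩
  · intro hc
    classical
    obtain ⟨d, hd, hsum⟩ := exists_sum_eq_of_mem_Icc_sum S
      (fun j _ => (hl j).trans_le <| (min_le_max).trans_eq (hu j).symm) hc
    choose! t ht hdt using fun j (hj : j ∈ S) => (hmem j).1 (hd j hj)
    set y' : ι → ℝ := fun j => if j ∈ S then t j else y j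
    have hoff : ∀ j ∉ S, y' j = y j := fun j hj => if_neg hj
    refine ⟨y', fun j => ?_, hoff, ?_⟩
    · by_cases hj : j ∈ S
      · simpa [y', hj] using ht j hj
      · simpa [y', hj] using hy j
    · have hS : ∑ j ∈ S, μ j * (y' j - y j) = ∑ j ∈ S, d j :=
        Finset.sum_congr rfl fun j hj => by simp only [y', if_pos hj, hdt j hj]
      linarith [sum_mul_sub_eq_sub_of_eq_off μ S hoff]

end Coordinates

theorem stmt1_general {n k : ℕ} (μ y : Fin n → ℝ) (hy : ∀ j, y j = 0 ∨ y j = 1)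
    (c : ℝ)
    (u l : Fin n → ℝ)
    (hu : ∀ j, u j = max (μ j * (1 - y j)) (-(μ j * y j)))
    (hl : ∀ j, l j = min (μ j * (1 - y j)) (-(μ j * y j)))
    (U L : ℝ)
    (hU : IsGreatest {v | ∃ S : Finset (Fin n), S.card = k ∧ v = ∑ j ∈ S, u j} U)
    (hL : IsLeast {v | ∃ S : Finset (Fin n), S.card = k ∧ v = ∑ j ∈ S, l j} L) :
    (∃ y' : Fin n → ℝ, (∀ j, y' j ∈ Set.Icc (0:ℝ) 1) ∧ (∑ j, μ j * y' j) = c ∧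
        {j | y j ≠ y' j}.ncard ≤ k) ↔
      ((∑ j, μ j * y j) + L ≤ c ∧ c ≤ (∑ j, μ j * y j) + U) := by
  have hy01 j : y j ∈ Icc (0 : ℝ) 1 := by rcases hy j with h | h <;> simp [h]
  have hreach := exists_eq_off_sum_mul_eq_iff hy01 hu hl
  constructor
  · rintro ⟨y', hy', hc, hcard⟩
    have hkn : k ≤ Fintype.card (Fin n) := by
      obtain ⟨S, rfl, -⟩ := hU.1
      exact S.card_le_univ
    rw [Set.ncard_eq_toFinset_card'] at hcard
    obtain ⟨S, hsub, rfl⟩ := Finset.exists_superset_card_eq hcard hkn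
    have hoff : ∀ j ∉ S, y' j = y j := fun j hj => by
      by_contra hne
      exact hj (hsub (by simpa [eq_comm] using hne))
    have hS := (hreach S c).1 ⟨y', hy', hoff, hc⟩
    constructor
    · linarith [hL.2 ⟨S, rfl, rfl⟩, hS.1]
    · linarith [hU.2 ⟨S, rfl, rfl⟩, hS.2]
  · rintro ⟨hcL, hcU⟩
    have h0 j : (0 : ℝ) ∈ Icc (l j) (u j) :=
      (mem_Icc_iff_exists_mul_sub_eq hu hl j).2 ⟨y j, hy01 j, by ring⟩
    obtain ⟨S, rfl, hS⟩ := exists_card_eq_mem_Icc_sum h0 hU hL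
      (δ := c - ∑ j, μ j * y j) ⟨by linarith, by linarith⟩
    obtain ⟨y', hy', hoff, hc⟩ := (hreach S c).2 hS
    refine ⟨y', hy', hc, ?_⟩
    calc {j | y j ≠ y' j}.ncard ≤ (S : Set (Fin n)).ncard :=
          Set.ncard_le_ncard (fun j hj => by_contra fun hjS => hj (hoff j hjS).symm)
            S.finite_toSet
      _ = S.card := Set.ncard_coe_finset S

/-- For binary `y`, the neighbor distance `d(c)` (minimum number of
coordinates of `y` one must change, allowing values in `[0,1]`, to make the dot
product with `μ` equal `c`) satisfies `d(c) ≤ k` iff `μ·y + L_k ≤ c ≤ μ·y + U_k`.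
The bound `d(c) ≤ k` is expressed as the existence of a witness `y'` differing from
`y` in at most `k` coordinates. -/
theorem stmt1 {n k : ℕ} (μ y : Fin n → ℝ) (hy : ∀ j, y j = 0 ∨ y j = 1)
    (hk : k ≤ n) (c : ℝ)
    (u l : Fin n → ℝ)
    (hu : ∀ j, u j = max (μ j * (1 - y j)) (-(μ j * y j)))
    (hl : ∀ j, l j = min (μ j * (1 - y j)) (-(μ j * y j)))
    (U L Un Ln : ℝ)
    (hU : IsGreatest {v | ∃ S : Finset (Fin n), S.card = k ∧ v = ∑ j ∈ S, u j} U)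
    (hL : IsLeast {v | ∃ S : Finset (Fin n), S.card = k ∧ v = ∑ j ∈ S, l j} L)
    (hUn : IsGreatest {v | ∃ S : Finset (Fin n), S.card = n ∧ v = ∑ j ∈ S, u j} Un)
    (hLn : IsLeast {v | ∃ S : Finset (Fin n), S.card = n ∧ v = ∑ j ∈ S, l j} Ln)
    (hattain : (∑ j, μ j * y j) + Ln ≤ c ∧ c ≤ (∑ j, μ j * y j) + Un) :
    (∃ y' : Fin n → ℝ, (∀ j, y' j ∈ Set.Icc (0:ℝ) 1) ∧ (∑ j, μ j * y' j) = c ∧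
        {j | y j ≠ y' j}.ncard ≤ k) ↔
      ((∑ j, μ j * y j) + L ≤ c ∧ c ≤ (∑ j, μ j * y j) + U) :=
  stmt1_general μ y hy c u l hu hl U L hU hL
end

section
/- Exponential mechanism privacy (single draw): let Ω be a finite set, and let q : Ω × Y → ℝ be a score function with sensitivity Δ, i.e., |q(ω,y) - q(ω,y')| ≤ Δ for all ω and all adjacent y, y'. Define the probability distribution P_y(ω) = exp(ε q(ω,y)/(2Δ)) / Σ_{ω'} exp(ε q(ω',y)/(2Δ)). Then for all adjacent y, y' and all ω ∈ Ω, P_y(ω) ≤ exp(ε) · P_{y'}(ω). -/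
open Real Finset

lemma exp_le_exp_mul_exp_of_sub_le {u v c : ℝ} (h : u - v ≤ c) : exp u ≤ exp c * exp v := by
  rw [← exp_add, exp_le_exp]
  linarith

lemma sum_exp_le_exp_mul_sum_exp {ι : Type*} (s : Finset ι) {f g : ι → ℝ} {c : ℝ}
    (h : ∀ i ∈ s, f i - g i ≤ c) : ∑ i ∈ s, exp (f i) ≤ exp c * ∑ i ∈ s, exp (g i) := by
  rw [mul_sum]
  exact sum_le_sum fun i hi => exp_le_exp_mul_exp_of_sub_le (h i hi)

/-- One factor `exp c` comes from the numerator, the other from the normalizing sum. -/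
theorem exp_div_sum_exp_le_of_abs_sub_le {Ω : Type*} [Fintype Ω] {f g : Ω → ℝ} {c : ℝ}
    (hfg : ∀ a, |f a - g a| ≤ c) (a : Ω) :
    exp (f a) / ∑ b, exp (f b) ≤ exp (2 * c) * (exp (g a) / ∑ b, exp (g b)) := by
  have hnum : exp (f a) ≤ exp c * exp (g a) :=
    exp_le_exp_mul_exp_of_sub_le (abs_le.mp (hfg a)).2
  have hden : ∑ b, exp (g b) ≤ exp c * ∑ b, exp (f b) :=
    sum_exp_le_exp_mul_sum_exp _ fun b _ => by linarith [(abs_le.mp (hfg b)).1]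
  have hpos : 0 < ∑ b, exp (g b) := sum_pos (fun b _ => exp_pos _) ⟨a, mem_univ a⟩
  calc exp (f a) / ∑ b, exp (f b)
      ≤ exp c * exp (g a) / (exp (-c) * ∑ b, exp (g b)) := by
        gcongr
        rw [exp_neg, inv_mul_le_iff₀ (exp_pos c)]
        exact hden
    _ = exp (2 * c) * (exp (g a) / ∑ b, exp (g b)) := by
        rw [two_mul, exp_add, exp_neg]
        field_simp

/-- Exponential mechanism privacy (single draw): with score function of
sensitivity `Δ` and output probabilities
`P_y(ω) = exp(ε q(ω,y)/(2Δ)) / Σ_{ω'} exp(ε q(ω',y)/(2Δ))`, for adjacent `y, y'` and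
all `ω`, `P_y(ω) ≤ exp(ε) P_{y'}(ω)`. -/
theorem stmt8 {Ω Y : Type*} [Fintype Ω] (adj : Y → Y → Prop)
    (q : Ω → Y → ℝ) (Δ ε : ℝ) (hΔ : 0 < Δ) (hε : 0 < ε)
    (hsens : ∀ (ω : Ω) (y y' : Y), adj y y' → |q ω y - q ω y'| ≤ Δ)
    (P : Y → Ω → ℝ)
    (hP : ∀ y ω, P y ω =
      Real.exp (ε * q ω y / (2 * Δ)) / ∑ ω' : Ω, Real.exp (ε * q ω' y / (2 * Δ)))
    (y y' : Y) (h : adj y y') (ω : Ω) :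
    P y ω ≤ Real.exp ε * P y' ω := by
  have hscore : ∀ a, |ε * q a y / (2 * Δ) - ε * q a y' / (2 * Δ)| ≤ ε / 2 := fun a => by
    rw [← sub_div, ← mul_sub, mul_div_right_comm, abs_mul, abs_of_pos (by positivity)]
    calc ε / (2 * Δ) * |q a y - q a y'| ≤ ε / (2 * Δ) * Δ := by gcongr; exact hsens a y y' h
      _ = ε / 2 := by field_simp
  rw [hP, hP]
  simpa only [mul_div_cancel₀ ε two_ne_zero] using exp_div_sum_exp_le_of_abs_sub_le hscore ω
end

section
/- Let y ∈ {0,1}ⁿ, μ ∈ ℝⁿ, and c ∈ ℝ with μ·y + L_n ≤ c ≤ μ·y + U_n (using the notation of Algorithm 1). If c ∈ [μ·y + L_k, μ·y + U_k] for some k ≤ n, then there exists y' ∈ [0,1]ⁿ with μ·y' = c and y' differing from y in at most k coordinates. -/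
/-! The extreme changes are moves to a vertex: `max (μⱼ(1 - yⱼ)) (-μⱼyⱼ) = μⱼ(bⱼ - yⱼ)` with
`bⱼ = 1` if `μⱼ ≥ 0` and `bⱼ = 0` otherwise, and dually for `min`. Hence `μ·y + U_k = μ·z` for the
point `z` obtained from `y` by moving the `k` coordinates of an optimal set to `b`. Every value
between `μ·y` and `μ·z` is attained on the segment `[y, z]`, which stays in the cube and changes
only those `k` coordinates. -/

open Finset

section

variable {ι : Type*} [Fintype ι]

theorem exists_sum_mul_eq_of_mem_segment (μ y z : ι → ℝ) (hy : ∀ j, y j ∈ Set.Icc (0:ℝ) 1)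
    (hz : ∀ j, z j ∈ Set.Icc (0:ℝ) 1) {c : ℝ}
    (hc : c ∈ segment ℝ (∑ j, μ j * y j) (∑ j, μ j * z j)) :
    ∃ y' : ι → ℝ, (∀ j, y' j ∈ Set.Icc (0:ℝ) 1) ∧ ∑ j, μ j * y' j = c ∧
      {j | y j ≠ y' j} ⊆ {j | y j ≠ z j} := by
  obtain ⟨a, b, ha, hb, hab, rfl⟩ := hc
  refine ⟨a • y + b • z, fun j => convex_Icc 0 1 (hy j) (hz j) ha hb hab, ?_, ?_⟩
  · simp only [Pi.add_apply, Pi.smul_apply, smul_eq_mul, mul_add, sum_add_distrib, mul_sum]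
    congr 1 <;> exact sum_congr rfl fun j _ => by ring
  · intro j hj hyz
    apply hj
    simp only [Pi.add_apply, Pi.smul_apply, smul_eq_mul, ← hyz, ← add_mul, hab, one_mul]

theorem sum_mul_piecewise [DecidableEq ι] (μ b y : ι → ℝ) (S : Finset ι) :
    ∑ j, μ j * S.piecewise b y j = ∑ j, μ j * y j + ∑ j ∈ S, μ j * (b j - y j) := by
  have hterm : ∀ j, μ j * S.piecewise b y j = μ j * y j + if j ∈ S then μ j * (b j - y j) else 0 :=
    fun j => by by_cases hj : j ∈ S <;> simp [hj]; ring
  rw [sum_congr rfl fun j _ => hterm j, sum_add_distrib, sum_ite_mem, univ_inter]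

theorem exists_sum_mul_eq_of_mem_segment_piecewise [DecidableEq ι] (μ y b : ι → ℝ)
    (hy : ∀ j, y j ∈ Set.Icc (0:ℝ) 1) (hb : ∀ j, b j ∈ Set.Icc (0:ℝ) 1) (S : Finset ι) {c : ℝ}
    (hc : c ∈ segment ℝ (∑ j, μ j * y j) (∑ j, μ j * y j + ∑ j ∈ S, μ j * (b j - y j))) :
    ∃ y' : ι → ℝ, (∀ j, y' j ∈ Set.Icc (0:ℝ) 1) ∧ ∑ j, μ j * y' j = c ∧
      {j | y j ≠ y' j}.ncard ≤ S.card := by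
  rw [← sum_mul_piecewise] at hc
  have hz : ∀ j, S.piecewise b y j ∈ Set.Icc (0:ℝ) 1 := fun j => by
    by_cases hj : j ∈ S <;> simp [hj, hb j, hy j]
  obtain ⟨y', hy', hsum, hsub⟩ := exists_sum_mul_eq_of_mem_segment μ y _ hy hz hc
  have hsubS : {j | y j ≠ y' j} ⊆ S := fun j hj => by
    by_contra hjS
    exact hsub hj (S.piecewise_eq_of_notMem b y hjS).symm
  exact ⟨y', hy', hsum, by simpa using Set.ncard_le_ncard hsubS⟩

end

theorem max_mul_one_sub_neg_mul (m x : ℝ) :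
    max (m * (1 - x)) (-(m * x)) = m * ((if 0 ≤ m then 1 else 0) - x) := by
  split_ifs with hm
  · exact max_eq_left (by linarith [mul_one_sub m x] : -(m * x) ≤ m * (1 - x))
  · rw [max_eq_right (by linarith [mul_one_sub m x, not_le.1 hm] : m * (1 - x) ≤ -(m * x))]
    ring

theorem min_mul_one_sub_neg_mul (m x : ℝ) :
    min (m * (1 - x)) (-(m * x)) = m * ((if 0 ≤ m then 0 else 1) - x) := by
  split_ifs with hm
  · rw [min_eq_right (by linarith [mul_one_sub m x] : -(m * x) ≤ m * (1 - x))]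
    ring
  · exact min_eq_left (by linarith [mul_one_sub m x, not_le.1 hm] : m * (1 - x) ≤ -(m * x))

theorem stmt12_general {n k : ℕ} (μ y : Fin n → ℝ) (hy : ∀ j, y j = 0 ∨ y j = 1)
    (c : ℝ)
    (u l : Fin n → ℝ)
    (hu : ∀ j, u j = max (μ j * (1 - y j)) (-(μ j * y j)))
    (hl : ∀ j, l j = min (μ j * (1 - y j)) (-(μ j * y j)))
    (U L : ℝ)
    (hU : IsGreatest {v | ∃ S : Finset (Fin n), S.card = k ∧ v = ∑ j ∈ S, u j} U)
    (hL : IsLeast {v | ∃ S : Finset (Fin n), S.card = k ∧ v = ∑ j ∈ S, l j} L)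
    (hc : (∑ j, μ j * y j) + L ≤ c ∧ c ≤ (∑ j, μ j * y j) + U) :
    ∃ y' : Fin n → ℝ, (∀ j, y' j ∈ Set.Icc (0:ℝ) 1) ∧ (∑ j, μ j * y' j) = c ∧
      {j | y j ≠ y' j}.ncard ≤ k := by
  have hy01 : ∀ j, y j ∈ Set.Icc (0:ℝ) 1 := fun j => by rcases hy j with h | h <;> simp [h]
  rcases le_total (∑ j, μ j * y j) c with hyc | hcy
  · obtain ⟨S, rfl, rfl⟩ := hU.1
    simp only [hu, max_mul_one_sub_neg_mul] at hc
    refine exists_sum_mul_eq_of_mem_segment_piecewise μ y (fun j => if 0 ≤ μ j then 1 else 0) hy01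
      (fun j => by split_ifs <;> simp) S ?_
    rw [segment_eq_uIcc]
    exact Set.mem_uIcc.2 (Or.inl ⟨hyc, hc.2⟩)
  · obtain ⟨S, rfl, rfl⟩ := hL.1
    simp only [hl, min_mul_one_sub_neg_mul] at hc
    refine exists_sum_mul_eq_of_mem_segment_piecewise μ y (fun j => if 0 ≤ μ j then 0 else 1) hy01
      (fun j => by split_ifs <;> simp) S ?_
    rw [segment_eq_uIcc]
    exact Set.mem_uIcc.2 (Or.inr ⟨hc.1, hcy⟩)

/-- For binary `y` and `c` with `μ·y + L_n ≤ c ≤ μ·y + U_n`, if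
`c ∈ [μ·y + L_k, μ·y + U_k]` then there exists `y' ∈ [0,1]ⁿ` with `μ·y' = c`
differing from `y` in at most `k` coordinates. -/
theorem stmt12 {n k : ℕ} (μ y : Fin n → ℝ) (hy : ∀ j, y j = 0 ∨ y j = 1)
    (hk : k ≤ n) (c : ℝ)
    (u l : Fin n → ℝ)
    (hu : ∀ j, u j = max (μ j * (1 - y j)) (-(μ j * y j)))
    (hl : ∀ j, l j = min (μ j * (1 - y j)) (-(μ j * y j)))
    (U L Un Ln : ℝ)
    (hU : IsGreatest {v | ∃ S : Finset (Fin n), S.card = k ∧ v = ∑ j ∈ S, u j} U)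
    (hL : IsLeast {v | ∃ S : Finset (Fin n), S.card = k ∧ v = ∑ j ∈ S, l j} L)
    (hUn : IsGreatest {v | ∃ S : Finset (Fin n), S.card = n ∧ v = ∑ j ∈ S, u j} Un)
    (hLn : IsLeast {v | ∃ S : Finset (Fin n), S.card = n ∧ v = ∑ j ∈ S, l j} Ln)
    (hattain : (∑ j, μ j * y j) + Ln ≤ c ∧ c ≤ (∑ j, μ j * y j) + Un)
    (hc : (∑ j, μ j * y j) + L ≤ c ∧ c ≤ (∑ j, μ j * y j) + U) :
    ∃ y' : Fin n → ℝ, (∀ j, y' j ∈ Set.Icc (0:ℝ) 1) ∧ (∑ j, μ j * y' j) = c ∧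
      {j | y j ≠ y' j}.ncard ≤ k :=
  stmt12_general μ y hy c u l hu hl U L hU hL hc
end
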